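/- arXiv:2304.01459 — 2 statements merged into one kernel-verified Lean document; each statement's English description precedes it below -/
import Mathlib

section
/- Let G1, G2 be groups and φ : G1 → G2 a bijection such that a multiset over G1 is a product-one sequence over G1 if and only if its termwise image under φ is a product-one sequence over G2. If g1, g2, g3 in G1 satisfy g1 g2 ≠ g2 g1 with φ(g1 g2) = φ(g1) φ(g2), and g1 g3 ≠ g3 g1 with φ(g1 g3) = φ(g3) φ(g1), then φ(g1 g2⁻¹) = φ(g1) φ(g2⁻¹), φ(g2⁻¹ g1) = φ(g2⁻¹) φ(g1), φ(g1 g3⁻¹) = φ(g3⁻¹) φ(g1), and φ(g3⁻¹ g1) = φ(g1) φ(g3⁻¹). -/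
/-!
Since `{x, y, (x * y)⁻¹}` is a product-one sequence, so is its image, and the two cyclic orders
of a three-term sequence give `φ (x * y) ∈ {φ x * φ y, φ y * φ x}` for all `x y`. If `φ (x * y)`
is the first product but `φ (x * y⁻¹)` were the second, the image of `{x * y⁻¹, (x * x)⁻¹, x * y}`
would multiply to `1`, and pulling this back forces `x` and `y` to commute. The statements about
`g3` are the same ones for `MulOpposite.op ∘ φ`, which again preserves product-one sequences.
-/

/-- A multiset `S` over a group `G` is a *product-one sequence* if its terms can be
ordered so that their product is `1`. -/
def IsProductOne {G : Type*} [Group G] (S : Multiset G) : Prop :=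
  ∃ l : List G, (l : Multiset G) = S ∧ l.prod = 1

/-- The monoid `B(G)` of product-one sequences over `G`, as a submonoid of the free
abelian monoid (finite multisets under addition) over `G`. -/
def ProductOneSubmonoid (G : Type*) [Group G] : AddSubmonoid (Multiset G) where
  carrier := {S | IsProductOne S}
  zero_mem' := ⟨[], rfl, rfl⟩
  add_mem' := by
    rintro a b ⟨l1, rfl, p1⟩ ⟨l2, rfl, p2⟩
    exact ⟨l1 ++ l2, by simp, by simp [p1, p2]⟩

open scoped commutatorElement

section

variable {G : Type*} [Group G]

theorem isProductOne_cons_iff {a : G} {S : Multiset G} :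
    IsProductOne (a ::ₘ S) ↔ ∃ l : List G, (l : Multiset G) = S ∧ a * l.prod = 1 := by
  constructor
  · rintro ⟨l, hl, hprod⟩
    have ha : a ∈ l := by simp [← Multiset.mem_coe, hl]
    obtain ⟨s, t, rfl⟩ := List.append_of_mem ha
    -- rotate `s ++ a :: t` to `a :: (t ++ s)`, a conjugate word
    refine ⟨t ++ s, ?_, ?_⟩
    · rw [← Multiset.cons_inj_right a, ← hl, Multiset.cons_coe, Multiset.coe_eq_coe]
      exact (List.perm_middle.trans (List.perm_append_comm.cons a)).symm
    · rw [List.prod_append, ← mul_assoc]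
      exact mul_eq_one_comm.1 (by simpa [mul_assoc] using hprod)
  · rintro ⟨l, rfl, hprod⟩
    exact ⟨a :: l, rfl, by simpa using hprod⟩

theorem isProductOne_pair_iff {u v : G} : IsProductOne (u ::ₘ {v}) ↔ u * v = 1 := by
  simp [isProductOne_cons_iff, Multiset.coe_eq_singleton]

theorem isProductOne_triple_iff {u v w : G} :
    IsProductOne (u ::ₘ v ::ₘ {w}) ↔ u * v * w = 1 ∨ u * w * v = 1 := by
  have hvw : v ::ₘ {w} = ([v, w] : List G) := rfl
  simp only [isProductOne_cons_iff, hvw, Multiset.coe_eq_coe, List.perm_pair]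
  constructor
  · rintro ⟨l, rfl | rfl, hprod⟩ <;> simp_all [mul_assoc]
  · rintro (hprod | hprod)
    exacts [⟨[v, w], by simp, by simpa [mul_assoc] using hprod⟩,
      ⟨[w, v], by simp, by simpa [mul_assoc] using hprod⟩]

theorem isProductOne_map_op_iff {S : Multiset G} :
    IsProductOne (S.map MulOpposite.op) ↔ IsProductOne S := by
  constructor
  · rintro ⟨l, hl, hprod⟩
    refine ⟨(l.map MulOpposite.unop).reverse, ?_, ?_⟩
    · rw [Multiset.coe_reverse, ← Multiset.map_coe, hl, Multiset.map_map]
      simp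
    · rw [← MulOpposite.unop_list_prod, hprod, MulOpposite.unop_one]
  · rintro ⟨l, rfl, hprod⟩
    exact ⟨(l.map MulOpposite.op).reverse, by simp,
      by rw [← MulOpposite.op_list_prod, hprod, MulOpposite.op_one]⟩

end

def PreservesProductOne {G H : Type*} [Group G] [Group H] (φ : G → H) : Prop :=
  ∀ S : Multiset G, IsProductOne S ↔ IsProductOne (S.map φ)

namespace PreservesProductOne

variable {G H : Type*} [Group G] [Group H] {φ : G → H} (hφ : PreservesProductOne φ)
include hφ

theorem op_comp : PreservesProductOne (fun x => MulOpposite.op (φ x)) := by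
  intro S
  rw [hφ S, ← isProductOne_map_op_iff, Multiset.map_map]
  rfl

theorem map_mul_map_eq_one_iff {a b : G} : φ a * φ b = 1 ↔ a * b = 1 := by
  simpa [isProductOne_pair_iff] using (hφ (a ::ₘ {b})).symm

theorem map_inv (x : G) : φ x⁻¹ = (φ x)⁻¹ :=
  eq_inv_of_mul_eq_one_right (hφ.map_mul_map_eq_one_iff.2 (mul_inv_cancel x))

theorem injective : Function.Injective φ := by
  intro a b hab
  rw [← mul_inv_eq_one, ← hφ.map_mul_map_eq_one_iff, hφ.map_inv, hab, mul_inv_cancel]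

theorem mul_eq_one_or_of_map {a b c : G} (habc : φ a * φ b * φ c = 1) :
    a * b * c = 1 ∨ a * c * b = 1 := by
  rw [← isProductOne_triple_iff, hφ]
  simpa [isProductOne_triple_iff] using Or.inl habc

theorem map_mul_eq_or (x y : G) : φ (x * y) = φ x * φ y ∨ φ (x * y) = φ y * φ x := by
  have hprod : IsProductOne (x ::ₘ y ::ₘ {(x * y)⁻¹}) :=
    isProductOne_triple_iff.2 (Or.inl (mul_inv_cancel _))
  rw [hφ] at hprod
  simp only [Multiset.map_cons, Multiset.map_singleton, isProductOne_triple_iff,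
    hφ.map_inv] at hprod
  rcases hprod with hprod | hprod
  · exact Or.inl (mul_inv_eq_one.1 hprod).symm
  · rw [mul_assoc, mul_eq_one_comm, mul_assoc, inv_mul_eq_one] at hprod
    exact Or.inr hprod

theorem map_mul_self (x : G) : φ (x * x) = φ x * φ x :=
  (hφ.map_mul_eq_or x x).elim id id

theorem map_mul_inv_of_map_mul {x y : G} (hxy : ¬Commute x y)
    (hmul : φ (x * y) = φ x * φ y) : φ (x * y⁻¹) = φ x * φ y⁻¹ := by
  refine (hφ.map_mul_eq_or x y⁻¹).resolve_right fun hanti => hxy ?_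
  have hprod : φ (x * y⁻¹) * φ (x * x)⁻¹ * φ (x * y) = 1 := by
    simp only [hanti, hφ.map_inv, hφ.map_mul_self, hmul]
    group
  rcases hφ.mul_eq_one_or_of_map hprod with h | h
  · have hcomm : ⁅x, y⁻¹⁆ = 1 := by
      rw [← h, commutatorElement_def]
      group
    exact Commute.inv_right_iff.1 (commutatorElement_eq_one_iff_commute.1 hcomm)
  · have hcomm : ⁅y⁻¹, x⁆ = 1 := by
      rw [← conj_eq_one_iff (a := x), ← h, commutatorElement_def]
      group
    exact (Commute.inv_left_iff.1 (commutatorElement_eq_one_iff_commute.1 hcomm)).symm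

theorem map_inv_mul_of_map_mul {x y : G} (hxy : ¬Commute x y)
    (hmul : φ (x * y) = φ x * φ y) : φ (y⁻¹ * x) = φ y⁻¹ * φ x := by
  refine (hφ.map_mul_eq_or y⁻¹ x).resolve_right fun hanti => hxy ?_
  have hcomm : Commute y⁻¹ x :=
    hφ.injective (hanti.trans (hφ.map_mul_inv_of_map_mul hxy hmul).symm)
  exact (Commute.inv_left_iff.1 hcomm).symm

end PreservesProductOne

theorem A6_general (G1 G2 : Type*) [Group G1] [Group G2]
    (φ : G1 → G2)
    (h : ∀ S : Multiset G1, IsProductOne S ↔ IsProductOne (S.map φ))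
    (g1 g2 g3 : G1)
    (hne12 : g1 * g2 ≠ g2 * g1) (h12 : φ (g1 * g2) = φ g1 * φ g2)
    (hne13 : g1 * g3 ≠ g3 * g1) (h13 : φ (g1 * g3) = φ g3 * φ g1) :
    φ (g1 * g2⁻¹) = φ g1 * φ g2⁻¹ ∧ φ (g2⁻¹ * g1) = φ g2⁻¹ * φ g1 ∧
    φ (g1 * g3⁻¹) = φ g3⁻¹ * φ g1 ∧ φ (g3⁻¹ * g1) = φ g1 * φ g3⁻¹ := by
  have hφ : PreservesProductOne φ := h
  have hop13 :
      MulOpposite.op (φ (g1 * g3)) = MulOpposite.op (φ g1) * MulOpposite.op (φ g3) := by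
    rw [h13, MulOpposite.op_mul]
  refine ⟨hφ.map_mul_inv_of_map_mul hne12 h12, hφ.map_inv_mul_of_map_mul hne12 h12, ?_, ?_⟩
  · exact MulOpposite.op_injective (hφ.op_comp.map_mul_inv_of_map_mul hne13 hop13)
  · exact MulOpposite.op_injective (hφ.op_comp.map_inv_mul_of_map_mul hne13 hop13)

theorem A6 (G1 G2 : Type*) [Group G1] [Group G2]
    (φ : G1 → G2) (hbij : Function.Bijective φ)
    (h : ∀ S : Multiset G1, IsProductOne S ↔ IsProductOne (S.map φ))
    (g1 g2 g3 : G1)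
    (hne12 : g1 * g2 ≠ g2 * g1) (h12 : φ (g1 * g2) = φ g1 * φ g2)
    (hne13 : g1 * g3 ≠ g3 * g1) (h13 : φ (g1 * g3) = φ g3 * φ g1) :
    φ (g1 * g2⁻¹) = φ g1 * φ g2⁻¹ ∧ φ (g2⁻¹ * g1) = φ g2⁻¹ * φ g1 ∧
    φ (g1 * g3⁻¹) = φ g3⁻¹ * φ g1 ∧ φ (g3⁻¹ * g1) = φ g1 * φ g3⁻¹ :=
  A6_general G1 G2 φ h g1 g2 g3 hne12 h12 hne13 h13
end

section
/- Let G1 be a torsion group, G2 a group, and φ : G1 → G2 a bijection such that a multiset over G1 is a product-one sequence over G1 if and only if its termwise image under φ is a product-one sequence over G2. Then φ is either a group isomorphism (φ(ab) = φ(a)φ(b) for all a, b in G1) or a group anti-isomorphism (φ(ab) = φ(b)φ(a) for all a, b in G1). -/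
/-!
Applying the hypothesis to `{x, x⁻¹}`, to `{x, y, (x y)⁻¹}` and to the preimage of
`{φ x, φ y, (φ x φ y)⁻¹}` shows that every pair `x, y` is of one of two kinds:
`φ (x y) = φ x φ y` and `φ (y x) = φ y φ x`, or both products are reversed. Since `φ` then
reflects commutation, a non-commuting pair is of exactly one kind. A case analysis of words in
three pairwise non-commuting elements shows that two non-commuting pairs sharing an element are
of the same kind, and the non-commuting graph of a group is connected, so all non-commuting
pairs are of one kind.
-/

theorem iff_of_not_commute {G : Type*} [Group G] {P : G → G → Prop}
    (hP : ∀ x y z, ¬Commute x y → ¬Commute y z → (P x y ↔ P y z)) {a b c d : G}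
    (hab : ¬Commute a b) (hcd : ¬Commute c d) : P a b ↔ P c d := by
  have hba : ¬Commute b a := mt Commute.symm hab
  have hdc : ¬Commute d c := mt Commute.symm hcd
  have symm {x y : G} (hxy : ¬Commute x y) : P x y ↔ P y x :=
    hP x y x hxy (mt Commute.symm hxy)
  by_cases hac : Commute a c
  swap
  · calc P a b ↔ P b a := symm hab
      _ ↔ P a c := hP b a c hba hac
      _ ↔ P c d := hP a c d hac hcd
  by_cases had : Commute a d
  swap
  · calc P a b ↔ P b a := symm hab
      _ ↔ P a d := hP b a d hba had
      _ ↔ P d c := hP a d c had hdc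
      _ ↔ P c d := symm hdc
  by_cases hbc : Commute b c
  swap
  · calc P a b ↔ P b c := hP a b c hab hbc
      _ ↔ P c d := hP b c d hbc hcd
  by_cases hbd : Commute b d
  swap
  · calc P a b ↔ P b d := hP a b d hab hbd
      _ ↔ P d c := hP b d c hbd hdc
      _ ↔ P c d := symm hdc
  -- `a, b` both commute with `c, d`, so `b * c` is a common neighbour of `a` and `d`.
  have habc : ¬Commute a (b * c) := fun h => hab (by simpa using h.mul_right hac.inv_right)
  have hbcd : ¬Commute (b * c) d := fun h => hcd (by simpa using hbd.inv_left.mul_left h)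
  calc P a b ↔ P b a := symm hab
    _ ↔ P a (b * c) := hP b a (b * c) hba habc
    _ ↔ P (b * c) d := hP a (b * c) d habc hbcd
    _ ↔ P d c := hP (b * c) d c hbcd hdc
    _ ↔ P c d := symm hdc

section HomOrAntiHom

variable {G H : Type*} [Group G] [Group H] {φ : G → H} {x y z : G}

def IsHomOrAntiHomAt (φ : G → H) (x y : G) : Prop :=
  (φ (x * y) = φ x * φ y ∧ φ (y * x) = φ y * φ x) ∨
    (φ (x * y) = φ y * φ x ∧ φ (y * x) = φ x * φ y)

theorem IsHomOrAntiHomAt.map_mul_eq_or (h : IsHomOrAntiHomAt φ x y) :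
    φ (x * y) = φ x * φ y ∨ φ (x * y) = φ y * φ x :=
  h.imp And.left And.left

theorem IsHomOrAntiHomAt.map_mul_iff_map_mul_swap (h : IsHomOrAntiHomAt φ x y) :
    φ (x * y) = φ x * φ y ↔ φ (y * x) = φ y * φ x := by
  rcases h with ⟨h₁, h₂⟩ | ⟨h₁, h₂⟩
  · simp only [h₁, h₂]
  · rw [h₁, h₂, eq_comm]

theorem commute_map_iff_of_isHomOrAntiHomAt (hinj : Function.Injective φ)
    (h : IsHomOrAntiHomAt φ x y) : Commute (φ x) (φ y) ↔ Commute x y := by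
  refine ⟨fun hc => hinj ?_, fun hc => ?_⟩ <;> rcases h with ⟨h₁, h₂⟩ | ⟨h₁, h₂⟩
  · rw [h₁, h₂, hc.eq]
  · rw [h₁, h₂, hc.eq]
  · rw [Commute, SemiconjBy, ← h₁, ← h₂, hc.eq]
  · rw [Commute, SemiconjBy, ← h₁, ← h₂, hc.eq]

theorem map_mul_of_commute_of_isHomOrAntiHomAt (hinj : Function.Injective φ)
    (h : IsHomOrAntiHomAt φ x y) (hc : Commute x y) : φ (x * y) = φ x * φ y := by
  rcases h.map_mul_eq_or with h' | h'
  · exact h'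
  · rw [h', ((commute_map_iff_of_isHomOrAntiHomAt hinj h).mpr hc).eq]

-- In each case split below both sides are words in `φ x, φ y, φ z`; cancelling their common
-- prefix and suffix leaves either the claim or a commutation of two of these letters.
theorem map_mul_of_pairwise_not_commute_map (hφ : ∀ x y, IsHomOrAntiHomAt φ x y)
    (hXY : ¬Commute (φ x) (φ y)) (hXZ : ¬Commute (φ x) (φ z)) (hYZ : ¬Commute (φ y) (φ z))
    (pxy : φ (x * y) = φ x * φ y) : φ (x * z) = φ x * φ z := by
  by_contra hn
  obtain ⟨pxz, pzx⟩ := (hφ x z).resolve_left fun h => hn h.1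
  have hYXZ : φ y * φ x * φ z = φ z * φ x * φ y := by
    have e : φ (z * x * y) = φ (z * (x * y)) := by rw [mul_assoc]
    rcases (hφ (z * x) y).map_mul_eq_or with e₁ | e₁ <;>
      rcases (hφ z (x * y)).map_mul_eq_or with e₂ | e₂ <;>
      rw [e₁, e₂, pzx, pxy] at e <;> (try simp only [mul_assoc, mul_right_inj] at e) <;>
      (try simp only [← mul_assoc, mul_left_inj] at e)
    · exact absurd e hXZ
    · exact absurd e.symm hYZ
    · exact e
    · exact absurd e.symm hXY
  have pxyz : φ (x * y * z) = φ x * φ y * φ z := by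
    rcases (hφ (x * y) z).map_mul_eq_or with e₁ | e₁
    · rwa [pxy] at e₁
    have e : φ (x * y * z) = φ (x * (y * z)) := by rw [mul_assoc]
    rcases (hφ x (y * z)).map_mul_eq_or with e₂ | e₂ <;>
      rcases (hφ y z).map_mul_eq_or with e₃ | e₃ <;>
      rw [e₁, e₂, e₃, pxy] at e <;> (try simp only [mul_assoc, mul_right_inj] at e) <;>
      (try simp only [← mul_assoc, mul_left_inj] at e)
    · exact absurd (mul_right_cancel (hYXZ.trans e)).symm hXY
    · exact absurd e.symm hXZ
    · exact absurd ((mul_right_inj (φ y)).mp (by simpa only [mul_assoc] using hYXZ.trans e)) hXZ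
    · exact absurd e hXY
  have e : φ (x * y * z * x) = φ (x * y * (z * x)) := by rw [mul_assoc]
  rcases (hφ (x * y * z) x).map_mul_eq_or with e₁ | e₁ <;>
    rcases (hφ (x * y) (z * x)).map_mul_eq_or with e₂ | e₂ <;>
    rw [e₁, e₂, pxyz, pxy, pzx] at e <;> (try simp only [mul_assoc, mul_right_inj] at e) <;>
    (try simp only [← mul_assoc, mul_left_inj] at e)
  · exact hXZ e.symm
  · exact hXZ ((mul_right_inj (φ y)).mp (by simpa only [mul_assoc] using e.trans hYXZ.symm)).symm
  · exact hXY e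
  · exact hXY (mul_right_cancel (e.trans hYXZ.symm))

theorem map_mul_self_mul_of_not_commute_map (hφ : ∀ x y, IsHomOrAntiHomAt φ x y)
    (hXY : ¬Commute (φ x) (φ y)) (pxy : φ (x * y) = φ x * φ y) :
    φ (x * (x * y)) = φ x * φ (x * y) := by
  have pxx : φ (x * x) = φ x * φ x := (hφ x x).map_mul_eq_or.elim id id
  by_contra hn
  obtain ⟨e₁, -⟩ := (hφ x (x * y)).resolve_left fun h => hn h.1
  rw [← mul_assoc, pxy] at e₁
  rcases (hφ (x * x) y).map_mul_eq_or with e | e <;> rw [e₁, pxx] at e <;>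
    (try simp only [mul_assoc, mul_right_inj] at e) <;>
    (try simp only [← mul_assoc, mul_left_inj] at e)
  · exact hXY e.symm
  · exact hXY e

theorem map_mul_iff_of_not_commute (hinj : Function.Injective φ)
    (hφ : ∀ x y, IsHomOrAntiHomAt φ x y) (hxy : ¬Commute x y) (hxz : ¬Commute x z) :
    φ (x * y) = φ x * φ y ↔ φ (x * z) = φ x * φ z := by
  have hmap {u v : G} : ¬Commute u v → ¬Commute (φ u) (φ v) :=
    mt (commute_map_iff_of_isHomOrAntiHomAt hinj (hφ u v)).mp
  suffices key : ∀ {y z}, ¬Commute x y → ¬Commute x z →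
      φ (x * y) = φ x * φ y → φ (x * z) = φ x * φ z from ⟨key hxy hxz, key hxz hxy⟩
  intro y z hxy hxz pxy
  by_cases hyz : Commute y z
  · have hxxy : ¬Commute x (x * y) := fun h =>
      hxy (by simpa using (Commute.refl x).inv_right.mul_right h)
    have hxyz : ¬Commute (x * y) z := fun h => hxz (by simpa using h.mul_left hyz.inv_left)
    exact map_mul_of_pairwise_not_commute_map hφ (hmap hxxy) (hmap hxz) (hmap hxyz)
      (map_mul_self_mul_of_not_commute_map hφ (hmap hxy) pxy)
  · exact map_mul_of_pairwise_not_commute_map hφ (hmap hxy) (hmap hxz) (hmap hyz) pxy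

theorem map_mul_or_map_mul_rev_of_isHomOrAntiHomAt (hinj : Function.Injective φ)
    (hφ : ∀ x y, IsHomOrAntiHomAt φ x y) :
    (∀ a b, φ (a * b) = φ a * φ b) ∨ (∀ a b, φ (a * b) = φ b * φ a) := by
  refine or_iff_not_imp_left.mpr fun hhom => ?_
  push Not at hhom
  obtain ⟨a, b, hne⟩ := hhom
  have hab : ¬Commute a b := fun hc =>
    hne (map_mul_of_commute_of_isHomOrAntiHomAt hinj (hφ a b) hc)
  intro c d
  by_cases hcd : Commute c d
  · rw [map_mul_of_commute_of_isHomOrAntiHomAt hinj (hφ c d) hcd,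
      ((commute_map_iff_of_isHomOrAntiHomAt hinj (hφ c d)).mpr hcd).eq]
  have hP (x y z : G) (hxy : ¬Commute x y) (hyz : ¬Commute y z) :
      φ (x * y) = φ x * φ y ↔ φ (y * z) = φ y * φ z :=
    (hφ x y).map_mul_iff_map_mul_swap.trans
      (map_mul_iff_of_not_commute hinj hφ (mt Commute.symm hxy) hyz)
  have hcd' : φ (c * d) ≠ φ c * φ d := fun h => hne ((iff_of_not_commute hP hab hcd).mpr h)
  exact ((hφ c d).resolve_left fun h => hcd' h.1).1

end HomOrAntiHom

section ProductOne

variable {G : Type*} [Group G]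

theorem mul_mul_eq_one_rotate {a b c : G} (h : a * b * c = 1) : b * c * a = 1 :=
  mul_eq_one_comm.mp (by rwa [← mul_assoc])

theorem isProductOne_pair_iff_s14 {a b : G} : IsProductOne ({a, b} : Multiset G) ↔ a * b = 1 := by
  refine ⟨fun ⟨l, hl, hprod⟩ => ?_, fun h => ⟨[a, b], rfl, by simpa using h⟩⟩
  have hperm : l ∈ [a, b].permutations := List.mem_permutations.mpr (Multiset.coe_eq_coe.mp hl)
  simp only [List.permutations, List.permutationsAux, List.foldr_cons, List.permutationsAux.rec,
    List.foldr_nil, List.permutationsAux2_snd_nil, List.permutationsAux2_snd_cons,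
    List.append_nil, id_eq, List.mem_cons, List.not_mem_nil, or_false] at hperm
  rcases hperm with rfl | rfl
  · simpa using hprod
  · simpa using mul_eq_one_comm.mp (by simpa using hprod)

theorem isProductOne_triple_iff_s14 {a b c : G} :
    IsProductOne ({a, b, c} : Multiset G) ↔ a * b * c = 1 ∨ a * c * b = 1 := by
  constructor
  · rintro ⟨l, hl, hprod⟩
    have hperm : l ∈ [a, b, c].permutations :=
      List.mem_permutations.mpr (Multiset.coe_eq_coe.mp hl)
    simp only [List.permutations, List.permutationsAux, List.foldr_cons, List.permutationsAux.rec,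
      List.foldr_nil, List.permutationsAux2_snd_nil, List.permutationsAux2_snd_cons,
      List.append_nil, id_eq, List.cons_append, List.nil_append, List.mem_cons,
      List.not_mem_nil, or_false] at hperm
    rcases hperm with rfl | rfl | rfl | rfl | rfl | rfl <;>
      simp only [List.prod_cons, List.prod_nil, mul_one, ← mul_assoc] at hprod
    · exact .inl hprod
    · exact .inr (mul_mul_eq_one_rotate hprod)
    · exact .inr (mul_mul_eq_one_rotate (mul_mul_eq_one_rotate hprod))
    · exact .inl (mul_mul_eq_one_rotate (mul_mul_eq_one_rotate hprod))
    · exact .inl (mul_mul_eq_one_rotate hprod)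
    · exact .inr hprod
  · rintro (h | h)
    · exact ⟨[a, b, c], rfl, by simpa [mul_assoc] using h⟩
    · exact ⟨[a, c, b], Multiset.coe_eq_coe.mpr ((List.Perm.swap b c []).cons a),
        by simpa [mul_assoc] using h⟩

end ProductOne

section PreservesProductOne

variable {G H : Type*} [Group G] [Group H] {φ : G → H}

theorem map_inv_of_isProductOne_map
    (hφ : ∀ S : Multiset G, IsProductOne S → IsProductOne (S.map φ)) (x : G) :
    φ x⁻¹ = (φ x)⁻¹ := by
  have h := hφ {x, x⁻¹} (isProductOne_pair_iff_s14.mpr (mul_inv_cancel x))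
  simp only [Multiset.insert_eq_cons, Multiset.map_cons, Multiset.map_singleton] at h
  exact eq_inv_of_mul_eq_one_right (isProductOne_pair_iff_s14.mp h)

theorem map_mul_eq_or_of_isProductOne_map
    (hφ : ∀ S : Multiset G, IsProductOne S → IsProductOne (S.map φ)) (x y : G) :
    φ (x * y) = φ x * φ y ∨ φ (x * y) = φ y * φ x := by
  have h := hφ {x, y, (x * y)⁻¹} (isProductOne_triple_iff_s14.mpr (.inl (mul_inv_cancel _)))
  simp only [Multiset.insert_eq_cons, Multiset.map_cons, Multiset.map_singleton,
    map_inv_of_isProductOne_map hφ] at h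
  rcases isProductOne_triple_iff_s14.mp h with h | h
  · exact .inl (mul_inv_eq_one.mp h).symm
  · exact .inr (inv_mul_eq_one.mp (by simpa only [mul_assoc] using mul_mul_eq_one_rotate h))

theorem mul_eq_map_mul_or_of_isProductOne_map_iff
    (hφ : ∀ S : Multiset G, IsProductOne S ↔ IsProductOne (S.map φ))
    (hsurj : Function.Surjective φ) (x y : G) :
    φ x * φ y = φ (x * y) ∨ φ x * φ y = φ (y * x) := by
  have map_inv := map_inv_of_isProductOne_map fun S => (hφ S).mp
  obtain ⟨z, hz⟩ := hsurj (φ x * φ y)⁻¹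
  have h : IsProductOne ({x, y, z} : Multiset G) := by
    refine (hφ _).mpr ?_
    simp only [Multiset.insert_eq_cons, Multiset.map_cons, Multiset.map_singleton, hz]
    exact isProductOne_triple_iff_s14.mpr (.inl (mul_inv_cancel _))
  rcases isProductOne_triple_iff_s14.mp h with h | h
  · left
    rw [eq_inv_of_mul_eq_one_right h, map_inv] at hz
    exact (inv_injective hz).symm
  · right
    have hzyx := mul_mul_eq_one_rotate h
    rw [mul_assoc, ← eq_inv_iff_mul_eq_one] at hzyx
    rw [hzyx, map_inv] at hz
    exact (inv_injective hz).symm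

theorem isHomOrAntiHomAt_of_isProductOne_map_iff
    (hφ : ∀ S : Multiset G, IsProductOne S ↔ IsProductOne (S.map φ))
    (hsurj : Function.Surjective φ) (x y : G) : IsHomOrAntiHomAt φ x y := by
  have hfwd := map_mul_eq_or_of_isProductOne_map fun S => (hφ S).mp
  have hbwd := mul_eq_map_mul_or_of_isProductOne_map_iff hφ hsurj
  rcases hfwd x y with pxy | pxy
  · refine .inl ⟨pxy, ?_⟩
    rcases hfwd y x with pyx | pyx
    · exact pyx
    rcases hbwd y x with q | q
    · exact q.symm
    · exact pyx.trans (pxy.symm.trans q.symm)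
  · rcases hbwd x y with q | q
    · refine .inl ⟨q.symm, ?_⟩
      rcases hfwd y x with pyx | pyx
      · exact pyx
      · exact pyx.trans (q.trans pxy)
    · exact .inr ⟨pxy, q.symm⟩

end PreservesProductOne

theorem A7_general (G1 G2 : Type*) [Group G1] [Group G2]
    (φ : G1 → G2) (hbij : Function.Bijective φ)
    (h : ∀ S : Multiset G1, IsProductOne S ↔ IsProductOne (S.map φ)) :
    (∀ a b : G1, φ (a * b) = φ a * φ b) ∨ (∀ a b : G1, φ (a * b) = φ b * φ a) :=
  map_mul_or_map_mul_rev_of_isHomOrAntiHomAt hbij.injective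
    (isHomOrAntiHomAt_of_isProductOne_map_iff h hbij.surjective)

theorem A7 (G1 G2 : Type*) [Group G1] [Group G2]
    (htor : ∀ g : G1, IsOfFinOrder g) (φ : G1 → G2) (hbij : Function.Bijective φ)
    (h : ∀ S : Multiset G1, IsProductOne S ↔ IsProductOne (S.map φ)) :
    (∀ a b : G1, φ (a * b) = φ a * φ b) ∨ (∀ a b : G1, φ (a * b) = φ b * φ a) :=
  A7_general G1 G2 φ hbij h
end
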